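/- Let n be even and let s ∈ {0,1}ⁿ be 2-alternating, i.e. s = s′·ι(s′) is the concatenation of a string s′ of length n/2 and its inversion. Then s is non-primitive if and only if there exists an odd integer m ≥ 3 dividing n/2 such that s′ is m-alternating, i.e. s′ is the concatenation of m blocks t, ι(t), t, ι(t), …, t each of length n/(2m). -/

import Mathlib

open Finset

namespace Necklaces

variable {n : ℕ}

/-- The cyclic left shift `L` on binary strings of length `n`. -/
def shiftL (s : Fin n → Bool) : Fin n → Bool :=
  fun i => s ⟨(i.val + 1) % n, Nat.mod_lt _ (Nat.lt_of_le_of_lt (Nat.zero_le _) i.isLt)⟩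

/-- Digitwise inversion (complement) `ι`. -/
def inv (s : Fin n → Bool) : Fin n → Bool := fun i => !(s i)

/-- A string is primitive if no nontrivial cyclic shift fixes it. -/
def Primitive (s : Fin n → Bool) : Prop :=
  ∀ k : ℕ, 0 < k → k < n → shiftL^[k] s ≠ s

/-- The necklace `⟨s⟩`: the orbit of `s` under cyclic shifts. -/
def necklace (s : Fin n → Bool) : Set (Fin n → Bool) :=
  {t | ∃ k : ℕ, t = shiftL^[k] s}

/-- The necklace inversion class `[s]`: the orbit of `s` under cyclic shifts and inversion. -/
def invClass (s : Fin n → Bool) : Set (Fin n → Bool) :=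
  {t | ∃ k : ℕ, t = shiftL^[k] s ∨ t = inv (shiftL^[k] s)}

/-- The number of 1's in `s`. -/
def onesCard (s : Fin n → Bool) : ℕ := (univ.filter (fun i => s i = true)).card

/-- The mod-2 partial sum map `Ξ`: the `i`-th digit of `Ξ(s)` is `s₁+⋯+sᵢ (mod 2)`. -/
def xi (s : Fin n → Bool) : Fin n → Bool :=
  fun i => decide (Odd ((Finset.Iic i).filter (fun j => s j = true)).card)

/-- `ι(s)` is a cyclic shift of `s`. -/
def ReflexiveStr (s : Fin n → Bool) : Prop := ∃ k : ℕ, shiftL^[k] s = inv s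

/-- `s` consists of two copies of a primitive string of length `n/2`
with an odd number of 1's. -/
def TwoCopies (s : Fin n → Bool) : Prop :=
  n % 2 = 0 ∧ shiftL^[n / 2] s = s ∧ (∀ k : ℕ, 0 < k → k < n / 2 → shiftL^[k] s ≠ s) ∧
    Odd ((univ.filter (fun i : Fin n => i.val < n / 2 ∧ s i = true)).card)

/-- `s` generates a necklace belonging to `Ñ⁺(n)`. -/
def GoodPlus (s : Fin n → Bool) : Prop :=
  (Primitive s ∧ Even (onesCard s)) ∨ TwoCopies s

/-- The set `Ñ⁺(n)` of necklaces. -/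
def NtildePlus (n : ℕ) : Set (Set (Fin n → Bool)) :=
  {N | ∃ s : Fin n → Bool, GoodPlus s ∧ N = necklace s}

/-- The set `N̄(n)` of necklace inversion classes of primitive strings. -/
def Nbar (n : ℕ) : Set (Set (Fin n → Bool)) :=
  {C | ∃ s : Fin n → Bool, Primitive s ∧ C = invClass s}

/-- Lexicographic order on strings, with `0 < 1` and the leftmost digit most significant. -/
def strLt (s t : Fin n → Bool) : Prop :=
  ∃ i : Fin n, (∀ j : Fin n, j < i → s j = t j) ∧ s i < t i

/-- Extended lexicographic order on extended strings `s^b`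
(`b = false` encodes `−`, `b = true` encodes `+`). -/
def extLt (p q : (Fin n → Bool) × Bool) : Prop :=
  strLt p.1 q.1 ∨ (p.1 = q.1 ∧ p.2 < q.2)

/-- The twisted shift operator `F`. -/
def twistF (s : Fin n → Bool) : Fin n → Bool :=
  if h : 0 < n then
    (if shiftL s ⟨0, h⟩ = true then shiftL s else inv (shiftL s))
  else s

/-- The extended twisted shift operator `F̃`. -/
def extF (p : (Fin n → Bool) × Bool) : (Fin n → Bool) × Bool :=
  if h : 0 < n then
    (if twistF p.1 ⟨n - 1, Nat.sub_lt h Nat.one_pos⟩ = true then (twistF p.1, p.2)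
     else (twistF p.1, !p.2))
  else p

/-- Cyclic successor on `Fin n`. -/
def finSucc (i : Fin n) : Fin n :=
  ⟨(i.val + 1) % n, Nat.mod_lt _ (Nat.lt_of_le_of_lt (Nat.zero_le _) i.isLt)⟩

open scoped Classical in
/-- The (0-based) lexicographic rank of `μ i` among `μ₁,…,μₙ`:
the number of indices `j` with `μ j` strictly smaller than `μ i`. -/
noncomputable def rankOf {X : Type*} (lt : X → X → Prop) (μ : Fin n → X) (i : Fin n) : ℕ :=
  (univ.filter (fun j => lt (μ j) (μ i))).card

/-- `σ` is the cyclic permutation `(r₁ r₂ ⋯ rₙ)` built from the ranks `rᵢ` of `μᵢ`: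
`σ(rᵢ) = r_{i+1}` (indices mod `n`). -/
def BuiltFrom {X : Type*} (lt : X → X → Prop) (μ : Fin n → X) (σ : Equiv.Perm (Fin n)) : Prop :=
  ∀ i j : Fin n, rankOf lt μ i = j.val → (σ j).val = rankOf lt μ (finSucc i)

/-- `σ` consists of a single `n`-cycle. -/
def IsCyclicPerm (σ : Equiv.Perm (Fin n)) : Prop :=
  ∀ x y : Fin n, ∃ k : ℕ, (σ ^ k) x = y

/-- `σ` is unimodal: decreasing on an initial segment, then increasing. -/
def IsUnimodal (σ : Equiv.Perm (Fin n)) : Prop :=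
  ∃ m : Fin n, (∀ i j : Fin n, i ≤ j → j ≤ m → σ j ≤ σ i) ∧
    (∀ i j : Fin n, m ≤ i → i ≤ j → σ i ≤ σ j)

/-- Cyclic unimodal permutations. -/
def CUPperm (σ : Equiv.Perm (Fin n)) : Prop := IsCyclicPerm σ ∧ IsUnimodal σ

/-- The string `A(σ)` obtained from the itinerary of `σ` (`+ ↦ 0`, `− ↦ 1`),
with the last digit chosen so that the total number of 1's is even.
(Here `m = σ⁻¹ 0` is the unique element with `σ m` least.) -/
def Astr [NeZero n] (σ : Equiv.Perm (Fin n)) : Fin n → Bool :=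
  fun i =>
    if i.val + 1 < n then decide ((σ ^ (i.val + 1)) (σ⁻¹ 0) < σ⁻¹ 0)
    else decide (Odd ((univ.filter (fun j : Fin n =>
      j.val + 1 < n ∧ (σ ^ (j.val + 1)) (σ⁻¹ 0) < σ⁻¹ 0)).card))

/-- The string used for `Ψ(σ)`: itinerary digits with the last digit chosen
so that the total number of 1's is odd. -/
def BstrOdd [NeZero n] (σ : Equiv.Perm (Fin n)) : Fin n → Bool :=
  fun i =>
    if i.val + 1 < n then decide ((σ ^ (i.val + 1)) (σ⁻¹ 0) < σ⁻¹ 0)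
    else !(decide (Odd ((univ.filter (fun j : Fin n =>
      j.val + 1 < n ∧ (σ ^ (j.val + 1)) (σ⁻¹ 0) < σ⁻¹ 0)).card)))

/-- The itinerary of a cyclic unimodal permutation: `none` encodes `⋆` (position `n`),
`some true` encodes `−` (i.e. `σⁱ(m) < m`), `some false` encodes `+` (i.e. `σⁱ(m) > m`). -/
def itin [NeZero n] (σ : Equiv.Perm (Fin n)) : Fin n → Option Bool :=
  fun i =>
    if i.val + 1 = n then none
    else some (decide ((σ ^ (i.val + 1)) (σ⁻¹ 0) < σ⁻¹ 0))

/-- `σ` arises from the class `C` by the construction defining `λ`: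
for some representative `t` of `C` beginning with `1`, `σ` is the cyclic permutation
built from the lexicographic ranks of the iterates of `t` under `F` (non-reflexive case)
or of `t^−` under `F̃` (reflexive case). -/
def LamRel [NeZero n] (C : Set (Fin n → Bool)) (σ : Equiv.Perm (Fin n)) : Prop :=
  ∃ t : Fin n → Bool, t 0 = true ∧ C = invClass t ∧
    ((¬ ReflexiveStr t ∧ BuiltFrom strLt (fun i : Fin n => twistF^[i.val] t) σ) ∨
     (ReflexiveStr t ∧ BuiltFrom extLt (fun i : Fin n => extF^[i.val] (t, false)) σ))

/-- `σ` arises from the representative `s` by the Weiss–Rogers construction `Φ`: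
`σ` is the cyclic permutation built from the lexicographic ranks of
`νᵢ = ι(Ξ(L^{i-1}(s)))`. -/
def PhiBuilt (s : Fin n → Bool) (σ : Equiv.Perm (Fin n)) : Prop :=
  BuiltFrom strLt (fun i : Fin n => inv (xi (shiftL^[i.val] s))) σ

end Necklaces

/-!
If `s` is 2-alternating then `L^N s = ι s` with `N = n / 2`. Since `ι` is an involution
commuting with `L`, the remainder `r = N mod p` of `N` by the minimal period `p` of `s` still
satisfies `L^r s = ι s`; hence `p ∣ 2r`, and `0 < r < p` forces `p = 2r`. Then
`N = (2q + 1) r`, and `q ≥ 1` exactly when `p < n`, i.e. when `s` is not primitive.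
Conversely, an antiperiod `ℓ` of the first half, together with the antiperiod `N = mℓ` for odd
`m`, makes `ℓ` an antiperiod of all of `s`, so `2ℓ < n` is a period.
-/

namespace Function

variable {α : Type*} {F g : α → α} {x : α}

theorem isPeriodicPt_two_mul_of_iterate_eq (hcomm : Function.Commute F g) (hg : Involutive g)
    {r : ℕ} (hr : F^[r] x = g x) : IsPeriodicPt F (2 * r) x := by
  change F^[2 * r] x = x
  rw [two_mul, iterate_add_apply, hr, (hcomm.iterate_left r).eq, hr, hg]

theorem minimalPeriod_eq_two_mul_mod_of_iterate_eq (hcomm : Function.Commute F g)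
    (hg : Involutive g) (hgx : g x ≠ x) {N : ℕ} (hN : F^[N] x = g x) :
    F^[N % minimalPeriod F x] x = g x ∧ minimalPeriod F x = 2 * (N % minimalPeriod F x) := by
  have hN0 : N ≠ 0 := by rintro rfl; exact hgx hN.symm
  have hp0 : 0 < minimalPeriod F x :=
    (isPeriodicPt_two_mul_of_iterate_eq hcomm hg hN).minimalPeriod_pos (by omega)
  set p := minimalPeriod F x
  have hr : F^[N % p] x = g x := iterate_mod_minimalPeriod_eq.trans hN
  have hr0 : N % p ≠ 0 := by
    intro h
    rw [h] at hr
    exact hgx hr.symm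
  have hdvd : p ∣ 2 * (N % p) :=
    (isPeriodicPt_two_mul_of_iterate_eq hcomm hg hr).minimalPeriod_dvd
  exact ⟨hr, (Nat.eq_of_dvd_of_lt_two_mul (by omega) hdvd
    (by have := Nat.mod_lt N hp0; omega)).symm⟩

end Function

namespace Necklaces

open Function

variable {n : ℕ}

theorem apply_add_two_mul_mul_of_local_antiperiod {g : ℕ → Bool} {ℓ N : ℕ}
    (hloc : ∀ j, j + ℓ < N → g (j + ℓ) = !g j) (c j : ℕ) (hc : j + 2 * ℓ * c < N) :
    g (j + 2 * ℓ * c) = g j := by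
  induction c with
  | zero => simp
  | succ c ih =>
    have hstep : j + 2 * ℓ * (c + 1) = j + 2 * ℓ * c + ℓ + ℓ := by ring
    rw [hstep, hloc _ (by omega), hloc _ (by rw [hstep] at hc; omega), Bool.not_not,
      ih (by rw [hstep] at hc; omega)]

theorem antiperiodic_of_local_antiperiod {g : ℕ → Bool} {ℓ m N : ℕ} (hm : Odd m)
    (hN : N = m * ℓ) (hg : ∀ i, g (i + N) = !g i) (hloc : ∀ j, j + ℓ < N → g (j + ℓ) = !g j)
    (i : ℕ) : g (i + ℓ) = !g i := by
  obtain ⟨q, rfl⟩ := hm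
  have hN' : N = 2 * ℓ * q + ℓ := by rw [hN]; ring
  have hN0 : 0 < N := Nat.pos_of_ne_zero fun h => by simpa [h] using hg 0
  induction i using Nat.strong_induction_on with
  | _ i ih =>
    by_cases hiN : N ≤ i
    · obtain ⟨i', rfl⟩ : ∃ i', i = i' + N := ⟨i - N, by omega⟩
      rw [show i' + N + ℓ = i' + ℓ + N by ring, hg, hg, ih i' (by omega)]
    by_cases hiℓ : i + ℓ < N
    · exact hloc i hiℓ
    -- `i + ℓ` wraps past `N`; as `m - 1 = 2q` is even, `i` sees the same digit as `i + ℓ - N`.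
    obtain ⟨j, rfl⟩ : ∃ j, i = j + 2 * ℓ * q := ⟨i + ℓ - N, by omega⟩
    rw [show j + 2 * ℓ * q + ℓ = j + N by omega, hg,
      apply_add_two_mul_mul_of_local_antiperiod hloc q j (by omega)]

theorem commute_shiftL_inv : Function.Commute (shiftL : (Fin n → Bool) → _) inv := fun _ => rfl

theorem inv_involutive : Involutive (inv : (Fin n → Bool) → _) :=
  fun s => funext fun i => Bool.not_not (s i)

theorem inv_ne_self [NeZero n] (s : Fin n → Bool) : inv s ≠ s :=
  fun h => Bool.not_ne_self (s 0) (congrFun h 0)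

def periodicExt [NeZero n] (s : Fin n → Bool) (i : ℕ) : Bool :=
  s ⟨i % n, Nat.mod_lt _ (NeZero.pos n)⟩

section periodicExt

variable [NeZero n] (s : Fin n → Bool)

theorem periodicExt_of_lt {i : ℕ} (hi : i < n) : periodicExt s i = s ⟨i, hi⟩ := by
  simp only [periodicExt, Nat.mod_eq_of_lt hi]

theorem periodicExt_val (i : Fin n) : periodicExt s i = s i :=
  periodicExt_of_lt s i.isLt

theorem shiftL_iterate_apply (k : ℕ) (i : Fin n) :
    shiftL^[k] s i = periodicExt s (i + k) := by
  induction k generalizing s with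
  | zero => exact (periodicExt_val s i).symm
  | succ k ih =>
    rw [iterate_succ_apply, ih]
    simp only [periodicExt, shiftL, Nat.mod_add_mod, Nat.add_assoc]

theorem periodicExt_shiftL_iterate (k i : ℕ) :
    periodicExt (shiftL^[k] s) i = periodicExt s (i + k) := by
  rw [periodicExt, shiftL_iterate_apply]
  simp only [periodicExt, Nat.mod_add_mod]

theorem shiftL_iterate_eq_inv_iff (k : ℕ) :
    shiftL^[k] s = inv s ↔ ∀ i, periodicExt s (i + k) = !periodicExt s i := by
  constructor
  · intro h i
    rw [← periodicExt_shiftL_iterate, h]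
    rfl
  · intro h
    funext i
    rw [shiftL_iterate_apply, h, periodicExt_val]
    rfl

end periodicExt

variable [NeZero n] {s : Fin n → Bool} {N : ℕ}

theorem shiftL_iterate_half_eq_inv (hn : n = 2 * N)
    (h2 : ∀ (j : ℕ) (hj : j < N), s ⟨j + N, by omega⟩ = !s ⟨j, by omega⟩) :
    shiftL^[N] s = inv s := by
  funext i
  rw [shiftL_iterate_apply, inv]
  by_cases hi : i.val < N
  · rw [periodicExt_of_lt s (by omega)]
    exact h2 i hi
  · have hi' : s i = !s ⟨i - N, by omega⟩ := by
      rw [← h2 (i - N) (by omega)]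
      congr 1
      exact Fin.ext (by simp only; omega)
    rw [hi', Bool.not_not, periodicExt]
    congr 1
    apply Fin.ext
    simp only
    rw [Nat.mod_eq_sub_mod (by omega), Nat.mod_eq_of_lt (by omega)]
    omega

theorem exists_odd_antiperiod_of_not_primitive (hn : n = 2 * N) (hs : shiftL^[N] s = inv s)
    (h : ¬ Primitive s) : ∃ m r, Odd m ∧ 3 ≤ m ∧ n = 2 * m * r ∧ shiftL^[r] s = inv s := by
  obtain ⟨hr, hp⟩ :=
    minimalPeriod_eq_two_mul_mod_of_iterate_eq commute_shiftL_inv inv_involutive (inv_ne_self s) hs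
  set p := minimalPeriod shiftL s
  have hpn : p < n := by
    simp only [Primitive, not_forall, not_not] at h
    obtain ⟨k, hk0, hkn, hk⟩ := h
    exact (IsPeriodicPt.minimalPeriod_le hk0 hk).trans_lt hkn
  set r := N % p
  obtain ⟨q, hq⟩ : ∃ q, N = p * q + r := ⟨N / p, (Nat.div_add_mod N p).symm⟩
  rcases Nat.eq_zero_or_pos q with rfl | hq0
  · omega
  refine ⟨2 * q + 1, r, odd_two_mul_add_one q, by omega, ?_, hr⟩
  rw [hn, hq, hp]
  ring

theorem not_primitive_of_local_antiperiod {m ℓ : ℕ} (hm : Odd m) (hm3 : 3 ≤ m)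
    (hn : n = 2 * N) (hN : N = m * ℓ) (hs : shiftL^[N] s = inv s)
    (hloc : ∀ (j : ℕ) (hj : j + ℓ < N), s ⟨j + ℓ, by omega⟩ = !s ⟨j, by omega⟩) :
    ¬ Primitive s := by
  have hℓ0 : 0 < ℓ := Nat.pos_of_ne_zero fun h => NeZero.ne n (by simp [hn, hN, h])
  have h3ℓ : 3 * ℓ ≤ N := hN ▸ Nat.mul_le_mul_right ℓ hm3
  have hℓ : shiftL^[ℓ] s = inv s := by
    rw [shiftL_iterate_eq_inv_iff] at hs ⊢
    refine antiperiodic_of_local_antiperiod hm hN hs fun j hj => ?_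
    rw [periodicExt_of_lt s (by omega), periodicExt_of_lt s (by omega)]
    exact hloc j hj
  exact fun hprim => hprim (2 * ℓ) (by omega) (by omega)
    (isPeriodicPt_two_mul_of_iterate_eq commute_shiftL_inv inv_involutive hℓ)

/-- Let `n` be even and let `s ∈ {0,1}ⁿ` be 2-alternating, i.e. the
concatenation of a string `s′` of length `n/2` and its inversion. Then `s` is
non-primitive if and only if there exists an odd `m ≥ 3` dividing `n/2` such that `s′` is
`m`-alternating, i.e. `s′` is the concatenation of `m` blocks `t, ι(t), t, …, t`, each of
length `ℓ = n/(2m)` — equivalently, digits of `s` at distance `ℓ` within the first half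
are complementary. -/
theorem two_alternating_nonprimitive_iff (n : ℕ) (h0 : 0 < n) (hev : n % 2 = 0)
    (s : Fin n → Bool)
    (h2 : ∀ (j : ℕ) (hj : j < n / 2), s ⟨j + n / 2, by omega⟩ = !(s ⟨j, by omega⟩)) :
    (¬ Primitive s) ↔
      ∃ m ℓ : ℕ, Odd m ∧ 3 ≤ m ∧ n = 2 * m * ℓ ∧
        ∀ (j : ℕ) (hj : j + ℓ < n / 2),
          s ⟨j + ℓ, by omega⟩ = !(s ⟨j, by omega⟩) := by
  have : NeZero n := ⟨h0.ne'⟩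
  have hn : n = 2 * (n / 2) := by omega
  have hhalf : shiftL^[n / 2] s = inv s := shiftL_iterate_half_eq_inv hn h2
  constructor
  · intro h
    obtain ⟨m, r, hm, hm3, hnmr, hr⟩ := exists_odd_antiperiod_of_not_primitive hn hhalf h
    refine ⟨m, r, hm, hm3, hnmr, fun j hj => ?_⟩
    have := congrFun hr ⟨j, by omega⟩
    rw [shiftL_iterate_apply] at this
    exact (periodicExt_of_lt s _).symm.trans this
  · rintro ⟨m, ℓ, hm, hm3, hnmℓ, hloc⟩
    have hN : n / 2 = m * ℓ := by rw [hnmℓ, mul_assoc, Nat.mul_div_cancel_left _ two_pos]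
    exact not_primitive_of_local_antiperiod hm hm3 hn hN hhalf hloc

end Necklaces
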